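/- If C is a 6-element cap in (Z/2Z)^n whose affine span has dimension 4, then the quad closure of C equals the affine span of C (so C is complete in that 4-flat), and every exclude point of C has multiplicity exactly 2. -/

import Mathlib

def IsCap {n : ℕ} (S : Set (Fin n → ZMod 2)) : Prop :=
  ∀ a ∈ S, ∀ b ∈ S, ∀ c ∈ S, ∀ d ∈ S,
    a ≠ b → a ≠ c → a ≠ d → b ≠ c → b ≠ d → c ≠ d → a + b + c + d ≠ 0

def excl {n : ℕ} (S : Finset (Fin n → ZMod 2)) : Finset (Fin n → ZMod 2) :=
  (S.powersetCard 3).image (fun t => t.sum id)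

def mult {n : ℕ} (S : Finset (Fin n → ZMod 2)) (p : Fin n → ZMod 2) : ℕ :=
  ((S.powersetCard 3).filter (fun t => t.sum id = p)).card


section Helpers
variable {n : ℕ}

lemma vadd_self (v : Fin n → ZMod 2) : v + v = 0 := by
  funext i
  have : ∀ x : ZMod 2, x + x = 0 := by decide
  exact this (v i)

lemma vneg_self (v : Fin n → ZMod 2) : -v = v := by
  funext i
  have : ∀ x : ZMod 2, -x = x := by decide
  exact this (v i)

lemma vsub_eq_add (v w : Fin n → ZMod 2) : v - w = v + w := by
  rw [sub_eq_add_neg, vneg_self]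

lemma finset_card_eq_four {α : Type*} [DecidableEq α] {s : Finset α} :
    s.card = 4 ↔ ∃ a b c d, a ≠ b ∧ a ≠ c ∧ a ≠ d ∧ b ≠ c ∧ b ≠ d ∧ c ≠ d ∧
      s = {a, b, c, d} := by
  classical
  constructor
  · intro h
    obtain ⟨a, t, hat, rfl, ht⟩ := Finset.card_eq_succ.mp h
    obtain ⟨b, c, d, hbc, hbd, hcd, rfl⟩ := Finset.card_eq_three.mp ht
    simp only [Finset.mem_insert, Finset.mem_singleton, not_or] at hat
    exact ⟨a, b, c, d, hat.1, hat.2.1, hat.2.2, hbc, hbd, hcd, rfl⟩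
  · rintro ⟨a, b, c, d, hab, hac, had, hbc, hbd, hcd, rfl⟩
    rw [Finset.card_insert_of_notMem (by simp [hab, hac, had]),
      Finset.card_insert_of_notMem (by simp [hbc, hbd]),
      Finset.card_insert_of_notMem (by simp [hcd]), Finset.card_singleton]
end Helpers

section Cap
variable {n : ℕ} {C : Finset (Fin n → ZMod 2)}

lemma no_two_sum (T : Finset (Fin n → ZMod 2)) (h2 : T.card = 2) :
    T.sum id ≠ 0 := by
  obtain ⟨a, b, hab, rfl⟩ := Finset.card_eq_two.mp h2
  rw [Finset.sum_insert (by simpa using hab), Finset.sum_singleton]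
  intro h
  apply hab
  have := congrArg (· + b) h
  simpa [add_assoc, vadd_self] using this

lemma no_four_sum (hC : IsCap (C : Set (Fin n → ZMod 2)))
    (T : Finset (Fin n → ZMod 2)) (hT : T ⊆ C) (h4 : T.card = 4) :
    T.sum id ≠ 0 := by
  obtain ⟨a, b, c, d, hab, hac, had, hbc, hbd, hcd, rfl⟩ := finset_card_eq_four.mp h4
  have ha : a ∈ (C : Set _) := hT (by simp)
  have hb : b ∈ (C : Set _) := hT (by simp)
  have hc : c ∈ (C : Set _) := hT (by simp)
  have hd : d ∈ (C : Set _) := hT (by simp)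
  have := hC a ha b hb c hc d hd hab hac had hbc hbd hcd
  rw [Finset.sum_insert (by simp [hab, hac, had]),
    Finset.sum_insert (by simp [hbc, hbd]),
    Finset.sum_insert (by simp [hcd]), Finset.sum_singleton]
  simpa [add_assoc] using this
end Cap

section Main
variable {n : ℕ} {C : Finset (Fin n → ZMod 2)}

lemma sum_eq_imp (hC : IsCap (C : Set (Fin n → ZMod 2))) (hcard : C.card = 6)
    {t t' : Finset (Fin n → ZMod 2)} (ht : t ⊆ C) (ht' : t' ⊆ C)
    (h3 : t.card = 3) (h3' : t'.card = 3) (hs : t.sum id = t'.sum id) :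
    t' = t ∨ t' = C \ t := by
  classical
  set S := (t \ t') ∪ (t' \ t) with hS
  have hdisj : Disjoint (t \ t') (t' \ t) :=
    disjoint_sdiff_sdiff
  have hsum1 : (t ∩ t').sum id + (t \ t').sum id = t.sum id :=
    Finset.sum_inter_add_sum_sdiff t t' id
  have hsum2 : (t ∩ t').sum id + (t' \ t).sum id = t'.sum id := by
    rw [Finset.inter_comm]
    exact Finset.sum_inter_add_sum_sdiff t' t id
  have heq : (t \ t').sum id = (t' \ t).sum id := by
    apply add_left_cancel (a := (t ∩ t').sum id)
    rw [hsum1, hsum2, hs]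
  have hSsum : S.sum id = 0 := by
    rw [hS, Finset.sum_union hdisj, heq, vadd_self]
  have hSsub : S ⊆ C := Finset.union_subset
    ((Finset.sdiff_subset).trans ht) ((Finset.sdiff_subset).trans ht')
  have hScard : S.card = 6 - 2 * (t ∩ t').card := by
    rw [hS, Finset.card_union_of_disjoint hdisj]
    have e1 : (t \ t').card + (t ∩ t').card = t.card :=
      Finset.card_sdiff_add_card_inter t t'
    have e2 : (t' \ t).card + (t ∩ t').card = t'.card := by
      rw [Finset.inter_comm]
      exact Finset.card_sdiff_add_card_inter t' t
    omega
  have hk : (t ∩ t').card ≤ 3 :=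
    h3 ▸ Finset.card_le_card Finset.inter_subset_left
  interval_cases hkk : (t ∩ t').card
  · -- k = 0 : S.card = 6
    right
    have hdisj' : Disjoint t' t := by
      rw [Finset.disjoint_right]
      intro x hx hx'
      have : x ∈ t ∩ t' := Finset.mem_inter.mpr ⟨hx, hx'⟩
      rw [Finset.card_eq_zero.mp hkk] at this
      simp at this
    apply Finset.eq_of_subset_of_card_le
    · intro x hx
      exact Finset.mem_sdiff.mpr ⟨ht' hx, fun h => (Finset.disjoint_left.mp hdisj' hx) h⟩
    · rw [Finset.card_sdiff_of_subset ht, hcard, h3, h3']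
  · exact absurd hSsum (no_four_sum hC S hSsub (by omega))
  · exact absurd hSsum (no_two_sum S (by omega))
  · -- k = 3: t ∩ t' = t hence t' = t
    left
    have h1 : t ∩ t' = t := Finset.eq_of_subset_of_card_le Finset.inter_subset_left (by omega)
    have h2 : t ⊆ t' := by
      rw [← h1]; exact Finset.inter_subset_right
    exact (Finset.eq_of_subset_of_card_le h2 (by omega)).symm
end Main

section SumC
variable {n : ℕ} {C : Finset (Fin n → ZMod 2)}

lemma two_nsmul_zero (v : Fin n → ZMod 2) : (2 : ℕ) • v = 0 := by
  rw [two_nsmul, vadd_self]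

lemma nsmul_odd {k : ℕ} (hk : Odd k) (v : Fin n → ZMod 2) : k • v = v := by
  obtain ⟨m, rfl⟩ := hk
  rw [add_smul, one_smul, mul_comm, mul_smul, two_nsmul_zero, smul_zero, zero_add]

lemma nsmul_even {k : ℕ} (hk : Even k) (v : Fin n → ZMod 2) : k • v = 0 := by
  obtain ⟨m, rfl⟩ := hk
  rw [← two_mul, mul_comm, mul_smul, two_nsmul_zero, smul_zero]

lemma sum_C_eq_zero (hC : IsCap (C : Set (Fin n → ZMod 2))) (hcard : C.card = 6)
    (hdim : Module.finrank (ZMod 2)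
      (affineSpan (ZMod 2) (C : Set (Fin n → ZMod 2))).direction = 4) :
    C.sum id = 0 := by
  classical
  have hne : C.Nonempty := by rw [← Finset.card_pos, hcard]; norm_num
  obtain ⟨p, hp⟩ := hne
  set D := C.erase p with hD
  have hDcard : D.card = 5 := by rw [hD, Finset.card_erase_of_mem hp, hcard]
  set dir := (affineSpan (ZMod 2) (C : Set (Fin n → ZMod 2))).direction with hdir
  have hps : p ∈ affineSpan (ZMod 2) (C : Set (Fin n → ZMod 2)) := subset_affineSpan _ _ hp
  have hvmem : ∀ x ∈ D, x + p ∈ dir := by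
    intro x hx
    have hxs : x ∈ affineSpan (ZMod 2) (C : Set (Fin n → ZMod 2)) :=
      subset_affineSpan _ _ (Finset.mem_erase.mp hx).2
    have h := AffineSubspace.vsub_mem_direction hxs hps
    rwa [vsub_eq_sub, vsub_eq_add] at h
  haveI : Fintype ↥dir := Fintype.ofFinite _
  set v : ↥D → ↥dir := fun x => (⟨(x : Fin n → ZMod 2) + p, hvmem x x.2⟩ : ↥dir) with hv
  have hnli : ¬ LinearIndependent (ZMod 2) v := by
    intro hli
    have h := hli.fintype_card_le_finrank
    rw [hdim, Fintype.card_coe, hDcard] at h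
    omega
  obtain ⟨g, hg0, i0, hi0⟩ := Fintype.not_linearIndependent_iff.mp hnli
  set s : Finset ↥D := Finset.univ.filter (fun i => g i ≠ 0) with hs
  have hone : ∀ x : ZMod 2, x ≠ 0 → x = 1 := by decide
  have hsum0 : ∑ i ∈ s, ((i : Fin n → ZMod 2) + p) = 0 := by
    have h1 : ∑ i ∈ s, g i • v i = (0 : ↥dir) := by
      rw [← hg0]
      apply Finset.sum_subset s.subset_univ
      intro i _ hi
      rw [hs] at hi
      simp only [Finset.mem_filter, Finset.mem_univ, true_and, not_not] at hi
      rw [hi, zero_smul]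
    have h2 : ∑ i ∈ s, v i = (0 : ↥dir) := by
      rw [← h1]
      apply Finset.sum_congr rfl
      intro i hi
      rw [hone (g i) (Finset.mem_filter.mp hi).2, one_smul]
    have h3 := congrArg (Subtype.val) h2
    rw [Submodule.coe_sum] at h3
    exact h3
  set s' : Finset (Fin n → ZMod 2) := s.image Subtype.val with hs'
  have hs'sub : s' ⊆ D := by
    intro x hx
    obtain ⟨i, _, rfl⟩ := Finset.mem_image.mp hx
    exact i.2
  have hs'card : s'.card = s.card := Finset.card_image_of_injective _ Subtype.val_injective
  have hs'ne : s'.Nonempty := by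
    refine Finset.Nonempty.image ⟨i0, ?_⟩ _
    rw [hs]; simp [hi0]
  have hsum' : (∑ x ∈ s', x) + s'.card • p = 0 := by
    have h : ∑ x ∈ s', (x + p) = 0 := by
      rw [hs', Finset.sum_image (fun a _ b _ h => Subtype.val_injective h)]
      exact hsum0
    rwa [Finset.sum_add_distrib, Finset.sum_const] at h
  have key : ∀ T : Finset (Fin n → ZMod 2), T ⊆ C → T.sum id = 0 → Even T.card →
      T.Nonempty → T = C := by
    intro T hT hT0 hTe hTne
    have h6 : T.card ≤ 6 := hcard ▸ Finset.card_le_card hT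
    have h1 : 1 ≤ T.card := Finset.card_pos.mpr hTne
    have hn2 : T.card ≠ 2 := fun h => no_two_sum T h hT0
    have hn4 : T.card ≠ 4 := fun h => no_four_sum hC T hT h hT0
    have h66 : T.card = 6 := by rcases hTe with ⟨m, hm⟩; omega
    exact Finset.eq_of_subset_of_card_le hT (by omega)
  have hDC : D ⊆ C := Finset.erase_subset _ _
  have hpnot : p ∉ s' := fun h => (Finset.mem_erase.mp (hs'sub h)).1 rfl
  rcases Nat.even_or_odd s'.card with he | ho
  · rw [nsmul_even he, add_zero] at hsum'
    have hT := key s' (hs'sub.trans hDC) hsum' he hs'ne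
    rw [← hT]
    exact hsum'
  · rw [nsmul_odd ho] at hsum'
    have hTsub : insert p s' ⊆ C := Finset.insert_subset hp (hs'sub.trans hDC)
    have hTsum : (insert p s').sum id = 0 := by
      rw [Finset.sum_insert hpnot]
      show p + ∑ x ∈ s', x = 0
      rw [add_comm]
      exact hsum'
    have hTcard : Even (insert p s').card := by
      rw [Finset.card_insert_of_notMem hpnot]
      exact Odd.add_one ho
    have hT := key _ hTsub hTsum hTcard ⟨p, Finset.mem_insert_self _ _⟩
    rw [← hT]
    exact hTsum
end SumC

section Mult
variable {n : ℕ} {C : Finset (Fin n → ZMod 2)}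

lemma compl_sum (hsC : C.sum id = 0) {t : Finset (Fin n → ZMod 2)} (ht : t ⊆ C) :
    (C \ t).sum id = t.sum id := by
  have h := Finset.sum_sdiff (f := id) ht
  have h2 := congrArg (· + t.sum id) h
  rw [add_assoc, vadd_self, add_zero, hsC, eq_comm, zero_add] at h2
  exact h2.symm

lemma compl_card (hcard : C.card = 6) {t : Finset (Fin n → ZMod 2)} (ht : t ⊆ C)
    (h3 : t.card = 3) : (C \ t).card = 3 := by
  rw [Finset.card_sdiff_of_subset ht, hcard, h3]

lemma mult_eq_two (hC : IsCap (C : Set (Fin n → ZMod 2))) (hcard : C.card = 6)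
    (hsC : C.sum id = 0) {p : Fin n → ZMod 2} (hp : p ∈ excl C) :
    mult C p = 2 := by
  classical
  obtain ⟨t, htm, hts⟩ := Finset.mem_image.mp hp
  rw [Finset.mem_powersetCard] at htm
  obtain ⟨ht, h3⟩ := htm
  have hne : t ≠ C \ t := by
    intro h
    have : t.Nonempty := Finset.card_pos.mp (by omega)
    obtain ⟨x, hx⟩ := this
    exact (Finset.mem_sdiff.mp (h ▸ hx)).2 (h ▸ hx |> fun _ => hx)
  have hfilter : (C.powersetCard 3).filter (fun u => u.sum id = p) = {t, C \ t} := by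
    ext u
    simp only [Finset.mem_filter, Finset.mem_powersetCard, Finset.mem_insert,
      Finset.mem_singleton]
    constructor
    · rintro ⟨⟨hu, hu3⟩, hus⟩
      exact sum_eq_imp hC hcard ht hu h3 hu3 (hts.trans hus.symm)
    · rintro (rfl | rfl)
      · exact ⟨⟨ht, h3⟩, hts⟩
      · exact ⟨⟨Finset.sdiff_subset, compl_card hcard ht h3⟩, (compl_sum hsC ht).trans hts⟩
  rw [mult, hfilter, Finset.card_insert_of_notMem (by simpa using hne),
    Finset.card_singleton]

lemma excl_card (hC : IsCap (C : Set (Fin n → ZMod 2))) (hcard : C.card = 6)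
    (hsC : C.sum id = 0) : (excl C).card = 10 := by
  classical
  have h20 : (C.powersetCard 3).card = 20 := by
    rw [Finset.card_powersetCard, hcard]
    decide
  have h := Finset.card_eq_sum_card_image (fun t => t.sum id) (C.powersetCard 3)
  rw [h20] at h
  have h2 : ∀ b ∈ excl C,
      ((C.powersetCard 3).filter (fun t => t.sum id = b)).card = 2 := by
    intro b hb
    exact mult_eq_two hC hcard hsC hb
  rw [show ((C.powersetCard 3).image (fun t => t.sum id)) = excl C from rfl] at h
  rw [Finset.sum_congr rfl h2, Finset.sum_const, smul_eq_mul] at h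
  omega

lemma disj_excl (hC : IsCap (C : Set (Fin n → ZMod 2))) :
    Disjoint C (excl C) := by
  classical
  rw [Finset.disjoint_right]
  intro p hpe hpC
  obtain ⟨t, htm, hts⟩ := Finset.mem_image.mp hpe
  rw [Finset.mem_powersetCard] at htm
  obtain ⟨ht, h3⟩ := htm
  by_cases hpt : p ∈ t
  · have hsum : (t.erase p).sum id = 0 := by
      have h := Finset.sum_erase_add t id hpt
      have h2 := congrArg (· + p) h
      simp only [id] at h2 ⊢
      have hts' : ∑ x ∈ t, x = p := hts
      rw [add_assoc, vadd_self, add_zero, hts'] at h2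
      rw [h2, vadd_self]
    exact no_two_sum _ (by rw [Finset.card_erase_of_mem hpt, h3]) hsum
  · have hsum : (insert p t).sum id = 0 := by
      rw [Finset.sum_insert hpt]
      show p + t.sum id = 0
      rw [hts, vadd_self]
    exact no_four_sum hC _ (Finset.insert_subset hpC ht)
      (by rw [Finset.card_insert_of_notMem hpt, h3]) hsum
end Mult

section Span
variable {n : ℕ} {C : Finset (Fin n → ZMod 2)}

lemma union_subset_span :
    ((C ∪ excl C : Finset (Fin n → ZMod 2)) : Set (Fin n → ZMod 2)) ⊆
      (affineSpan (ZMod 2) (C : Set (Fin n → ZMod 2)) : Set (Fin n → ZMod 2)) := by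
  classical
  intro x hx
  simp only [Finset.coe_union, Set.mem_union, Finset.mem_coe] at hx
  rcases hx with hx | hx
  · exact subset_affineSpan _ _ hx
  · obtain ⟨t, htm, rfl⟩ := Finset.mem_image.mp hx
    rw [Finset.mem_powersetCard] at htm
    obtain ⟨ht, h3⟩ := htm
    obtain ⟨a, b, c, hab, hac, hbc, rfl⟩ := Finset.card_eq_three.mp h3
    have ha := subset_affineSpan (ZMod 2) (C : Set (Fin n → ZMod 2))
      (ht (show a ∈ ({a, b, c} : Finset (Fin n → ZMod 2)) by simp))
    have hb := subset_affineSpan (ZMod 2) (C : Set (Fin n → ZMod 2))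
      (ht (show b ∈ ({a, b, c} : Finset (Fin n → ZMod 2)) by simp))
    have hc := subset_affineSpan (ZMod 2) (C : Set (Fin n → ZMod 2))
      (ht (show c ∈ ({a, b, c} : Finset (Fin n → ZMod 2)) by simp))
    have ha' : a ∈ affineSpan (ZMod 2) (C : Set (Fin n → ZMod 2)) := ha
    have hb' : b ∈ affineSpan (ZMod 2) (C : Set (Fin n → ZMod 2)) := hb
    have hc' : c ∈ affineSpan (ZMod 2) (C : Set (Fin n → ZMod 2)) := hc
    have hd1 := AffineSubspace.vsub_mem_direction hb' ha'
    have hd2 := AffineSubspace.vsub_mem_direction hc' ha'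
    have hmem := AffineSubspace.vadd_mem_of_mem_direction
      (Submodule.add_mem _ hd1 hd2) ha'
    have heq : ((b -ᵥ a) + (c -ᵥ a)) +ᵥ a = ({a, b, c} : Finset (Fin n → ZMod 2)).sum id := by
      rw [Finset.sum_insert (by simp [hab, hac]), Finset.sum_insert (by simp [hbc]),
        Finset.sum_singleton]
      show (b - a + (c - a)) + a = a + (b + c)
      linear_combination -vadd_self a
    rw [← heq]
    exact hmem

lemma span_ncard (hcard : C.card = 6)
    (hdim : Module.finrank (ZMod 2)
      (affineSpan (ZMod 2) (C : Set (Fin n → ZMod 2))).direction = 4) :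
    (affineSpan (ZMod 2) (C : Set (Fin n → ZMod 2)) : Set (Fin n → ZMod 2)).ncard = 16 := by
  classical
  have hne : C.Nonempty := by rw [← Finset.card_pos, hcard]; norm_num
  obtain ⟨p, hp⟩ := hne
  set dir := (affineSpan (ZMod 2) (C : Set (Fin n → ZMod 2))).direction with hdir
  have hps : p ∈ affineSpan (ZMod 2) (C : Set (Fin n → ZMod 2)) := subset_affineSpan _ _ hp
  have hset : (affineSpan (ZMod 2) (C : Set (Fin n → ZMod 2)) : Set (Fin n → ZMod 2)) =
      (fun v => v + p) '' (dir : Set (Fin n → ZMod 2)) := by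
    ext x
    constructor
    · intro hx
      have h := AffineSubspace.vsub_mem_direction hx hps
      refine ⟨x - p, by rwa [← vsub_eq_sub], ?_⟩
      show x - p + p = x
      linear_combination
    · rintro ⟨v, hv, rfl⟩
      exact AffineSubspace.vadd_mem_of_mem_direction hv hps
  rw [hset, Set.ncard_image_of_injective _ (add_left_injective p)]
  haveI : Fintype ↥dir := Fintype.ofFinite _
  rw [← Nat.card_coe_set_eq]
  have hcc : Nat.card ↥(dir : Set (Fin n → ZMod 2)) = Fintype.card ↥dir :=
    Nat.card_eq_fintype_card
  rw [hcc, Module.card_eq_pow_finrank (K := ZMod 2), hdim, ZMod.card]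
  norm_num
end Span


/-- A 6-element cap of dimension 4 completes its affine span (its quad closure equals
its affine span) and every exclude point has multiplicity exactly 2. -/
theorem six_cap_dim_four {n : ℕ} (C : Finset (Fin n → ZMod 2))
    (hC : IsCap (C : Set (Fin n → ZMod 2))) (hcard : C.card = 6)
    (hdim : Module.finrank (ZMod 2)
      (affineSpan (ZMod 2) (C : Set (Fin n → ZMod 2))).direction = 4) :
    ((C ∪ excl C : Finset (Fin n → ZMod 2)) : Set (Fin n → ZMod 2)) =
        (affineSpan (ZMod 2) (C : Set (Fin n → ZMod 2)) : Set (Fin n → ZMod 2)) ∧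
      ∀ p ∈ excl C, mult C p = 2 := by
  classical
  have hsC := sum_C_eq_zero hC hcard hdim
  constructor
  · have hdisj := disj_excl hC
    have hucard : (C ∪ excl C).card = 16 := by
      rw [Finset.card_union_of_disjoint hdisj, hcard, excl_card hC hcard hsC]
    apply Set.eq_of_subset_of_ncard_le union_subset_span
    rw [Set.ncard_coe_finset, hucard, span_ncard hcard hdim]
  · intro p hp
    exact mult_eq_two hC hcard hsC hp
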